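/- arXiv:2109.06920 — 2 statements merged into one kernel-verified Lean document; each statement's English description precedes it below -/
import Mathlib

section
/- Let k be odd and let Q^k(t) = Im((t+i)^k) viewed as a real polynomial of degree k-1. Then Q^k is an even function of t (a polynomial in t^2), and it has exactly (k-1)/2 positive real roots and (k-1)/2 negative real roots. -/
open Polynomial

/-- The real polynomial `Q^k(t) = ∑_{h=0}^{⌊k/2⌋} (-1)^h C(k, 2h+1) t^{k-1-2h}`. -/
noncomputable def QR (k : ℕ) : Polynomial ℝ :=
  ∑ h ∈ Finset.range (k / 2 + 1),
    Polynomial.C ((-1 : ℝ) ^ h * (k.choose (2 * h + 1) : ℝ)) * Polynomial.X ^ (k - 1 - 2 * h)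

/-! Expanding `(t + i)^k` binomially gives `Q^k(t) = Im((t + i)^k)`.
Since `cot x + i = e^{ix} / sin x`, this yields `Q^k(cot x) = sin(k x) / sin^k x`, so the
`cot (m π / k)` with `1 ≤ m ≤ (k-1)/2` are `(k-1)/2` distinct positive roots. For odd `k` only
even powers of `t` occur, so their negatives are roots as well, and as `deg Q^k ≤ k - 1` there
is no room for any other nonzero real root. -/

theorem Finset.sum_range_two_mul {M : Type*} [AddCommMonoid M] (f : ℕ → M) (n : ℕ) :
    ∑ j ∈ range (2 * n), f j = ∑ h ∈ range n, (f (2 * h) + f (2 * h + 1)) := by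
  induction n with
  | zero => simp
  | succ n ih =>
    rw [mul_add, mul_one, sum_range_succ, sum_range_succ, sum_range_succ, ih, add_assoc]

theorem eval_QR (k : ℕ) (t : ℝ) : (QR k).eval t = ((t + Complex.I) ^ k).im := by
  have hbinom : ((t + Complex.I) ^ k).im =
      ∑ j ∈ Finset.range (2 * (k / 2 + 1)), (Complex.I ^ j).im * (t ^ (k - j) * k.choose j) := by
    rw [add_comm, add_pow, Complex.im_sum]
    refine Finset.sum_subset (Finset.range_subset_range.mpr (by omega)) (fun j _ hj => ?_) |>.trans
      (Finset.sum_congr rfl fun j _ => ?_)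
    · rw [Finset.mem_range, not_lt] at hj
      simp [Nat.choose_eq_zero_of_lt (Nat.lt_of_succ_le hj)]
    · rw [mul_assoc, ← Complex.im_mul_ofReal]
      push_cast
      rfl
  rw [hbinom, Finset.sum_range_two_mul, QR, eval_finsetSum]
  refine Finset.sum_congr rfl fun h _ => ?_
  have hI_even : (Complex.I ^ (2 * h)).im = 0 := by
    rw [pow_mul, Complex.I_sq, ← Complex.ofReal_one, ← Complex.ofReal_neg, ← Complex.ofReal_pow,
      Complex.ofReal_im]
  have hI_odd : (Complex.I ^ (2 * h + 1)).im = (-1) ^ h := by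
    rw [pow_succ, pow_mul, Complex.I_sq, ← Complex.ofReal_one, ← Complex.ofReal_neg,
      ← Complex.ofReal_pow, Complex.mul_I_im, Complex.ofReal_re]
  rw [hI_even, hI_odd, zero_mul, zero_add, eval_C_mul, eval_X_pow, Nat.sub_sub, Nat.add_comm 1]
  ring

theorem natDegree_QR_le (k : ℕ) : (QR k).natDegree ≤ k - 1 :=
  natDegree_sum_le_of_forall_le _ _ fun _ _ =>
    (natDegree_C_mul_le _ _).trans ((natDegree_X_pow_le _).trans (Nat.sub_le _ _))

theorem exists_QR_eq_comp_X_sq {k : ℕ} (hk : Odd k) : ∃ R : ℝ[X], QR k = R.comp (X ^ 2) := by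
  refine ⟨∑ h ∈ Finset.range (k / 2 + 1),
    C ((-1 : ℝ) ^ h * (k.choose (2 * h + 1) : ℝ)) * X ^ (k / 2 - h), ?_⟩
  simp only [QR, sum_comp, mul_comp, C_comp, X_pow_comp, ← pow_mul]
  refine Finset.sum_congr rfl fun h _ => ?_
  obtain ⟨n, rfl⟩ := hk
  congr 2
  omega

open Real

theorem eval_QR_cot (k : ℕ) {x : ℝ} (hx : sin x ≠ 0) :
    (QR k).eval (cot x) = sin (k * x) / sin x ^ k := by
  have hcot :
      (cot x : ℂ) + Complex.I = (Complex.cos x + Complex.sin x * Complex.I) / (sin x : ℂ) := by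
    have : (sin x : ℂ) ≠ 0 := Complex.ofReal_ne_zero.mpr hx
    rw [cot_eq_cos_div_sin, Complex.ofReal_div, Complex.ofReal_cos, Complex.ofReal_sin] at *
    field_simp
  rw [eval_QR, hcot, div_pow, Complex.cos_add_sin_mul_I_pow, ← Complex.ofReal_pow,
    Complex.div_ofReal_im, ← Complex.ofReal_natCast, ← Complex.ofReal_mul, ← Complex.ofReal_cos,
    ← Complex.ofReal_sin, Complex.add_im, Complex.ofReal_im, Complex.mul_I_im, Complex.ofReal_re,
    zero_add]

theorem QR_ne_zero {k : ℕ} (hk : 0 < k) : QR k ≠ 0 := by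
  intro hzero
  have hx : sin (π / (2 * k)) ≠ 0 := (sin_pos_of_pos_of_lt_pi (by positivity) (by
    rw [div_lt_iff₀ (by positivity)]; nlinarith [pi_pos, (Nat.one_le_cast (α := ℝ)).mpr hk])).ne'
  have h := eval_QR_cot k hx
  have hangle : (k : ℝ) * (π / (2 * k)) = π / 2 := by field_simp
  rw [hzero, eval_zero, hangle, sin_pi_div_two] at h
  exact one_div_ne_zero (pow_ne_zero k hx) h.symm

theorem isRoot_QR_cot {k m : ℕ} (hm : 0 < m) (hmk : m < k) : (QR k).IsRoot (cot (m * π / k)) := by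
  have hk : (0 : ℝ) < k := by exact_mod_cast hm.trans hmk
  have hx : sin (m * π / k) ≠ 0 := (sin_pos_of_pos_of_lt_pi (by positivity) (by
    rw [div_lt_iff₀ hk]; nlinarith [pi_pos, (Nat.cast_lt (α := ℝ)).mpr hmk])).ne'
  rw [IsRoot, eval_QR_cot k hx, mul_div_cancel₀ _ hk.ne', sin_nat_mul_pi, zero_div]

theorem Real.injOn_cot : Set.InjOn cot (Set.Ioo 0 π) := by
  intro x ⟨hx0, hxπ⟩ y ⟨hy0, hyπ⟩ h
  have := injOn_tan (x₁ := π / 2 - x) (x₂ := π / 2 - y) ⟨by linarith, by linarith⟩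
    ⟨by linarith, by linarith⟩ (by simp only [tan_pi_div_two_sub, tan_inv_eq_cot, h])
  linarith

theorem Real.cot_pos_of_pos_of_lt_pi_div_two {x : ℝ} (h0 : 0 < x) (h : x < π / 2) : 0 < cot x := by
  rw [← tan_inv_eq_cot]
  exact inv_pos.mpr (tan_pos_of_pos_of_lt_pi_div_two h0 h)

theorem Polynomial.le_card_roots_filter {R : Type*} [CommRing R] [IsDomain R] {p : R[X]}
    (hp : p ≠ 0) {P : R → Prop} [DecidablePred P] {s : Finset R}
    (hs : ∀ x ∈ s, P x ∧ p.IsRoot x) : s.card ≤ (p.roots.filter P).card := by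
  classical
  refine (Finset.card_le_card fun x hx => ?_).trans (Multiset.toFinset_card_le _)
  rw [Multiset.mem_toFinset, Multiset.mem_filter, mem_roots hp]
  exact (hs x hx).symm

theorem Polynomial.card_roots_filter_pos_and_neg_of_eq_comp_X_sq {K : Type*} [Field K]
    [LinearOrder K] [IsStrictOrderedRing K] {p q : K[X]} {n : ℕ}
    (hpq : p = q.comp (X ^ 2)) (hp : p ≠ 0) (hdeg : p.natDegree ≤ 2 * n) {s : Finset K}
    (hs : s.card = n) (hs_pos : ∀ x ∈ s, 0 < x) (hs_root : ∀ x ∈ s, p.IsRoot x) :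
    (p.roots.filter (0 < ·)).card = n ∧ (p.roots.filter (· < 0)).card = n := by
  have hneg_root : ∀ x, p.IsRoot (-x) ↔ p.IsRoot x := by simp [hpq, IsRoot]
  have hpos : n ≤ (p.roots.filter (0 < ·)).card :=
    hs ▸ le_card_roots_filter hp fun x hx => ⟨hs_pos x hx, hs_root x hx⟩
  have hneg : n ≤ (p.roots.filter (· < 0)).card := by
    refine hs ▸ (s.card_image_of_injective neg_injective).symm.le.trans
      (le_card_roots_filter hp fun y hy => ?_)
    obtain ⟨x, hx, rfl⟩ := Finset.mem_image.mp hy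
    exact ⟨neg_neg_iff_pos.mpr (hs_pos x hx), (hneg_root x).mpr (hs_root x hx)⟩
  have htotal : (p.roots.filter (0 < ·)).card + (p.roots.filter (· < 0)).card ≤ 2 * n := by
    have hneg_le : p.roots.filter (· < 0) ≤ p.roots.filter (¬ 0 < ·) :=
      Multiset.monotone_filter_right _ fun _ hx => not_lt.mpr (le_of_lt hx)
    calc _ ≤ (p.roots.filter (0 < ·)).card + (p.roots.filter (¬ 0 < ·)).card :=
          Nat.add_le_add_left (Multiset.card_le_card hneg_le) _
      _ = p.roots.card := by rw [← Multiset.card_add, Multiset.filter_add_not]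
      _ ≤ 2 * n := (card_roots' p).trans hdeg
  omega

theorem mul_pi_div_mem_Ioo_zero_pi_div_two {m k : ℕ} (hm : 0 < m) (hmk : 2 * m < k) :
    m * π / k ∈ Set.Ioo 0 (π / 2) := by
  have hm' : (0 : ℝ) < m := by exact_mod_cast hm
  have hmk' : 2 * (m : ℝ) < k := by exact_mod_cast hmk
  have hk : (0 : ℝ) < k := by linarith
  refine ⟨by positivity, ?_⟩
  rw [div_lt_iff₀ hk]
  nlinarith [pi_pos]

theorem QR_odd_even_function_and_root_count_general (k : ℕ) (hk : Odd k) :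
    (∃ R : Polynomial ℝ, QR k = R.comp (Polynomial.X ^ 2)) ∧
      ((QR k).roots.filter (fun x => 0 < x)).card = (k - 1) / 2 ∧
      ((QR k).roots.filter (fun x => x < 0)).card = (k - 1) / 2 := by
  obtain ⟨R, hR⟩ := exists_QR_eq_comp_X_sq hk
  obtain ⟨n, rfl⟩ := hk
  have hangle : ∀ m ∈ Finset.Icc 1 n, m * π / (2 * n + 1 : ℕ) ∈ Set.Ioo 0 (π / 2) := fun m hm =>
    mul_pi_div_mem_Ioo_zero_pi_div_two (Finset.mem_Icc.mp hm).1 (by grind)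
  rw [show (2 * n + 1 - 1) / 2 = n by omega]
  refine ⟨⟨R, hR⟩, card_roots_filter_pos_and_neg_of_eq_comp_X_sq hR (QR_ne_zero (by omega))
    ((natDegree_QR_le _).trans (by omega))
    (s := (Finset.Icc 1 n).image fun m : ℕ => cot (m * π / (2 * n + 1 : ℕ))) ?_ ?_ ?_⟩
  · rw [Finset.card_image_of_injOn, Nat.card_Icc, Nat.add_sub_cancel]
    intro a ha b hb hab
    have hsub : Set.Ioo 0 (π / 2) ⊆ Set.Ioo 0 π :=
      Set.Ioo_subset_Ioo_right (half_le_self pi_pos.le)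
    have := injOn_cot (hsub (hangle a ha)) (hsub (hangle b hb)) hab
    field_simp at this
    exact_mod_cast this
  · simp only [Finset.mem_image]
    rintro _ ⟨m, hm, rfl⟩
    exact cot_pos_of_pos_of_lt_pi_div_two (hangle m hm).1 (hangle m hm).2
  · simp only [Finset.mem_image]
    rintro _ ⟨m, hm, rfl⟩
    exact isRoot_QR_cot (Finset.mem_Icc.mp hm).1 (by grind)

theorem QR_odd_even_function_and_root_count (k : ℕ) (hk : Odd k) (hk1 : 1 ≤ k) :
    (∃ R : Polynomial ℝ, QR k = R.comp (Polynomial.X ^ 2)) ∧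
      ((QR k).roots.filter (fun x => 0 < x)).card = (k - 1) / 2 ∧
      ((QR k).roots.filter (fun x => x < 0)).card = (k - 1) / 2 :=
  QR_odd_even_function_and_root_count_general k hk
end

section
/- Fix v = (v_0, v_1) ∈ ℂ² with v_1 ≠ 0 and v_0² + v_1² ≠ 0, and let k ≥ 1. Then the polynomial system p_0^k(u_0, u_1²) = v_0, u_1 · p_1^{k-1}(u_0, u_1²) = v_1 has exactly k² solutions (u_0, u_1) ∈ ℂ² (all with u_1 ≠ 0 and p_1^{k-1}(u_0,u_1²) ≠ 0), where p_0^k, p_1^{k-1} are determined by (x+iy)^k = p_0^k(x,y²) + i y p_1^{k-1}(x,y²). Equivalently, the map (u_0,u_1) ↦ (Re and Im-type components of (u_0 + √(-1) u_1)^k) is exactly k²-to-1 over such v. -/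
/-! Since `(u₀ ± i u₁)^k = p0 k u₀ u₁² ± i u₁ p1 k u₀ u₁²`, the linear change of coordinates
`(a, b) = (u₀ + i u₁, u₀ - i u₁)` turns the system into `a^k = v₀ + i v₁`, `b^k = v₀ - i v₁`.
Both right-hand sides are nonzero, their product being `v₀² + v₁²`, so each equation has `k`
distinct roots and the system has `k²` solutions. -/

/-- `p0 k x s = ∑_h (-1)^h C(k,2h) x^(k-2h) s^h`, determined by
`(x + i y)^k = p0 k x (y²) + i y * p1 k x (y²)`. -/
noncomputable def p0 (k : ℕ) (x s : ℂ) : ℂ :=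
  ∑ h ∈ Finset.range (k / 2 + 1),
    (-1 : ℂ) ^ h * (k.choose (2 * h) : ℂ) * x ^ (k - 2 * h) * s ^ h

/-- `p1 k x s = ∑_h (-1)^h C(k,2h+1) x^(k-1-2h) s^h`, determined by
`(x + i y)^k = p0 k x (y²) + i y * p1 k x (y²)`. -/
noncomputable def p1 (k : ℕ) (x s : ℂ) : ℂ :=
  ∑ h ∈ Finset.range ((k + 1) / 2),
    (-1 : ℂ) ^ h * (k.choose (2 * h + 1) : ℂ) * x ^ (k - 1 - 2 * h) * s ^ h

open Complex Finset

theorem Finset.sum_range_eq_sum_even_add_sum_odd {M : Type*} [AddCommMonoid M] (f : ℕ → M)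
    (n : ℕ) :
    ∑ j ∈ range n, f j =
      ∑ h ∈ range ((n + 1) / 2), f (2 * h) + ∑ h ∈ range (n / 2), f (2 * h + 1) := by
  induction n with
  | zero => simp
  | succ n ih =>
    rw [sum_range_succ, ih]
    rcases Nat.even_or_odd' n with ⟨m, rfl | rfl⟩
    · rw [show (2 * m + 1 + 1) / 2 = m + 1 by omega, show (2 * m + 1) / 2 = m by omega,
        show 2 * m / 2 = m by omega, sum_range_succ]
      abel
    · rw [show (2 * m + 1 + 1 + 1) / 2 = m + 1 by omega, show (2 * m + 1 + 1) / 2 = m + 1 by omega,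
        show (2 * m + 1) / 2 = m by omega]
      simp only [sum_range_succ]
      abel

theorem add_I_mul_pow (k : ℕ) (x y : ℂ) :
    (x + I * y) ^ k = p0 k x (y ^ 2) + I * y * p1 k x (y ^ 2) := by
  rw [add_comm, add_pow, sum_range_eq_sum_even_add_sum_odd,
    show (k + 1 + 1) / 2 = k / 2 + 1 by omega, p0, p1, mul_sum]
  congr 1 <;> refine sum_congr rfl fun h _ => ?_
  · rw [mul_pow, pow_mul, I_sq]
    ring
  · rw [show k - (2 * h + 1) = k - 1 - 2 * h by omega, pow_succ, mul_pow, pow_mul, I_sq]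
    ring

theorem sub_I_mul_pow (k : ℕ) (x y : ℂ) :
    (x - I * y) ^ k = p0 k x (y ^ 2) - I * y * p1 k x (y ^ 2) := by
  simpa [neg_sq, sub_eq_add_neg] using add_I_mul_pow k x (-y)

noncomputable def addSubIMulEquiv : ℂ × ℂ ≃ ℂ × ℂ where
  toFun u := (u.1 + I * u.2, u.1 - I * u.2)
  invFun a := ((a.1 + a.2) / 2, (a.1 - a.2) / (2 * I))
  left_inv u := by
    ext <;> field_simp <;> ring
  right_inv a := by
    ext <;> field_simp <;> ring

theorem setOf_p0_p1_eq_preimage (k : ℕ) (v₀ v₁ : ℂ) :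
    {u : ℂ × ℂ | p0 k u.1 (u.2 ^ 2) = v₀ ∧ u.2 * p1 k u.1 (u.2 ^ 2) = v₁} =
      addSubIMulEquiv ⁻¹' ({a | a ^ k = v₀ + I * v₁} ×ˢ {b | b ^ k = v₀ - I * v₁}) := by
  ext u
  simp only [Set.mem_ofPred_eq, Set.mem_preimage, Set.mem_prod, addSubIMulEquiv,
    Equiv.coe_fn_mk, add_I_mul_pow, sub_I_mul_pow]
  constructor
  · rintro ⟨h₀, h₁⟩
    exact ⟨by rw [h₀, ← h₁]; ring, by rw [h₀, ← h₁]; ring⟩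
  · rintro ⟨hplus, hminus⟩
    refine ⟨by linear_combination (hplus + hminus) / 2, mul_left_cancel₀ I_ne_zero ?_⟩
    linear_combination (hplus - hminus) / 2

open Polynomial in
theorem ncard_setOf_pow_eq {K : Type*} [Field K] [IsAlgClosed K] {k : ℕ} (hk : (k : K) ≠ 0)
    {c : K} (hc : c ≠ 0) : {z : K | z ^ k = c}.ncard = k := by
  classical
  have hk₀ : 0 < k := Nat.pos_of_ne_zero (by rintro rfl; simp at hk)
  rw [← nthRootsFinset_toSet hk₀, Set.ncard_coe_finset, nthRootsFinset_def, nthRoots,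
    Multiset.toFinset_card_of_nodup (nodup_roots (separable_X_pow_sub_C c hk hc)),
    IsAlgClosed.card_roots_eq_natDegree, natDegree_X_pow_sub_C]

/-- The `k`-th power map is exactly `k²`-to-`1` over points `v = (v₀, v₁)` with `v₁ ≠ 0` and
`v₀² + v₁² ≠ 0`: the system `p0(u₀,u₁²) = v₀`, `u₁ p1(u₀,u₁²) = v₁` has exactly `k²` solutions,
all of which satisfy `u₁ ≠ 0` and `p1(u₀,u₁²) ≠ 0`. -/
theorem power_map_k_squared_to_one (k : ℕ) (hk : 1 ≤ k) (v₀ v₁ : ℂ)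
    (hv₁ : v₁ ≠ 0) (hv : v₀ ^ 2 + v₁ ^ 2 ≠ 0) :
    {u : ℂ × ℂ | p0 k u.1 (u.2 ^ 2) = v₀ ∧ u.2 * p1 k u.1 (u.2 ^ 2) = v₁}.ncard = k ^ 2 ∧
      ∀ u ∈ {u : ℂ × ℂ | p0 k u.1 (u.2 ^ 2) = v₀ ∧ u.2 * p1 k u.1 (u.2 ^ 2) = v₁},
        u.2 ≠ 0 ∧ p1 k u.1 (u.2 ^ 2) ≠ 0 := by
  have hk' : (k : ℂ) ≠ 0 := Nat.cast_ne_zero.mpr (by omega)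
  have hnorm : (v₀ + I * v₁) * (v₀ - I * v₁) ≠ 0 := by
    convert hv using 1
    linear_combination (-v₁ ^ 2) * I_sq
  obtain ⟨hplus, hminus⟩ := mul_ne_zero_iff.mp hnorm
  refine ⟨?_, fun u hu => mul_ne_zero_iff.mp (hu.2 ▸ hv₁)⟩
  rw [setOf_p0_p1_eq_preimage, Set.ncard_preimage_of_injective_subset_range
      addSubIMulEquiv.injective (by simp), Set.ncard_prod, ncard_setOf_pow_eq hk' hplus,
    ncard_setOf_pow_eq hk' hminus, sq]
end
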